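/- If h_k and h_{k'} are independent standard Gaussian random variables, then the random variable 2 h_k h_{k'} / sqrt(h_k^2 + h_{k'}^2) is also a standard Gaussian random variable. -/

import Mathlib

open MeasureTheory ProbabilityTheory Real Set
open scoped ENNReal NNReal

/-!
Box–Muller: in polar coordinates `(r cos θ, r sin θ)` the law of two independent centred
Gaussians of equal variance has a radial density times Lebesgue measure in `θ`. The map
`(x, y) ↦ 2xy/√(x² + y²)` becomes `r sin 2θ`, while the second coordinate is `r sin θ`.
Since `θ ↦ 2θ` preserves Haar measure on the circle `ℝ/2πℤ`, both have the same law, and the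
law of the second coordinate is the original Gaussian.
-/

/-- The paper's `D(h, h')`. -/
noncomputable def alignment (p : ℝ × ℝ) : ℝ := 2 * p.1 * p.2 / √(p.1 ^ 2 + p.2 ^ 2)

lemma measurable_alignment : Measurable alignment := by
  unfold alignment; fun_prop

lemma alignment_polarCoord_symm {r : ℝ} (hr : 0 ≤ r) (θ : ℝ) :
    alignment (polarCoord.symm (r, θ)) = r * sin (2 * θ) := by
  have hnorm : (r * cos θ) ^ 2 + (r * sin θ) ^ 2 = r ^ 2 := by
    linear_combination r ^ 2 * cos_sq_add_sin_sq θ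
  rw [polarCoord_symm_apply, alignment, hnorm, sqrt_sq hr, sin_two_mul]
  rcases hr.eq_or_lt with rfl | hr
  · simp
  · field_simp

theorem withDensity_eq_map_polarCoord_symm (f : ℝ × ℝ → ℝ≥0∞) :
    volume.withDensity f = ((volume.restrict polarCoord.target).withDensity
      fun p => ENNReal.ofReal p.1 * f (polarCoord.symm p)).map polarCoord.symm := by
  have hmeas : Measurable polarCoord.symm := continuous_polarCoord_symm.measurable
  ext s hs
  rw [Measure.map_apply hmeas hs, withDensity_apply _ hs, withDensity_apply _ (hmeas hs),
    ← lintegral_indicator (hmeas hs), ← lintegral_indicator hs, ← lintegral_comp_polarCoord_symm]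
  congr 1 with p
  rw [indicator_mul_right, ← indicator_comp_right]
  rfl

theorem withDensity_radial_eq_map_polarCoord_symm {g : ℝ → ℝ≥0∞} (hg : Measurable g) :
    volume.withDensity (fun p : ℝ × ℝ => g (p.1 ^ 2 + p.2 ^ 2)) =
      (((volume.restrict (Ioi 0)).withDensity fun r => ENNReal.ofReal r * g (r ^ 2)).prod
        (volume.restrict (Ioo (-π) π))).map polarCoord.symm := by
  rw [withDensity_eq_map_polarCoord_symm, prod_withDensity_left (by fun_prop),
    Measure.prod_restrict, ← Measure.volume_eq_prod, ← polarCoord_target]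
  congr 2 with p
  rw [polarCoord_symm_apply]
  congr 2
  linear_combination p.1 ^ 2 * cos_sq_add_sin_sq p.2

lemma gaussianReal_prod_gaussianReal_eq_withDensity {v : ℝ≥0} (hv : v ≠ 0) :
    (gaussianReal 0 v).prod (gaussianReal 0 v) = volume.withDensity
      fun p => ENNReal.ofReal ((2 * π * v)⁻¹ * exp (-(p.1 ^ 2 + p.2 ^ 2) / (2 * v))) := by
  simp_rw [gaussianReal_of_var_ne_zero 0 hv, prod_withDensity (measurable_gaussianPDF 0 v)
    (measurable_gaussianPDF 0 v), ← Measure.volume_eq_prod]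
  congr with p
  rw [gaussianPDF, gaussianPDF, ← ENNReal.ofReal_mul (gaussianPDFReal_nonneg _ _ _)]
  congr 1
  calc gaussianPDFReal 0 v p.1 * gaussianPDFReal 0 v p.2
      = (√(2 * π * v) ^ 2)⁻¹ * (exp (-p.1 ^ 2 / (2 * v)) * exp (-p.2 ^ 2 / (2 * v))) := by
        simp only [gaussianPDFReal, sub_zero]; ring
    _ = _ := by rw [sq_sqrt (by positivity), ← exp_add]; ring_nf

lemma AddCircle.map_coe_intCast_mul_restrict_Ioc {T : ℝ} [Fact (0 < T)] (t : ℝ) {n : ℤ}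
    (hn : n ≠ 0) :
    (volume.restrict (Ioc t (t + T))).map (fun θ => ((n * θ : ℝ) : AddCircle T)) = volume := by
  have hcomp : (fun θ => ((n * θ : ℝ) : AddCircle T)) = (n • ·) ∘ ((↑) : ℝ → AddCircle T) := by
    ext θ
    simp [← zsmul_eq_mul]
  rw [hcomp, ((Measure.measurePreserving_zsmul (volume : Measure (AddCircle T)) hn).comp
    (AddCircle.measurePreserving_mk T t)).map_eq]

lemma AddCircle.map_prodMap_coe_intCast_mul_prod_restrict_Ioc {α : Type*} [MeasurableSpace α]
    (ρ : Measure α) [SFinite ρ] {T : ℝ} [Fact (0 < T)] (t : ℝ) {n : ℤ} (hn : n ≠ 0) :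
    (ρ.prod (volume.restrict (Ioc t (t + T)))).map
      (Prod.map id fun θ => ((n * θ : ℝ) : AddCircle T)) = ρ.prod volume := by
  rw [← Measure.map_prod_map _ _ measurable_id (by fun_prop), Measure.map_id,
    AddCircle.map_coe_intCast_mul_restrict_Ioc t hn]

theorem map_alignment_comp_polarCoord_symm_eq_map_snd (ρ : Measure ℝ) [SFinite ρ]
    (hρ : ∀ᵐ r ∂ρ, 0 ≤ r) :
    (ρ.prod (volume.restrict (Ioo (-π) π))).map (alignment ∘ polarCoord.symm) =
      (ρ.prod (volume.restrict (Ioo (-π) π))).map (Prod.snd ∘ polarCoord.symm) := by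
  have : Fact (0 < 2 * π) := ⟨two_pi_pos⟩
  set P := ρ.prod (volume.restrict (Ioo (-π) π)) with hP
  have hP_Ioc : P = ρ.prod (volume.restrict (Ioc (-π) (-π + 2 * π))) := by
    rw [hP, Measure.restrict_congr_set Ioo_ae_eq_Ioc]; ring_nf
  let Ψ : ℝ × AddCircle (2 * π) → ℝ := fun q => q.1 * sin_periodic.lift q.2
  have hsin : Continuous (sin_periodic.lift : AddCircle (2 * π) → ℝ) :=
    continuous_sin.quotient_liftOn' _
  have hΨ : Measurable Ψ := measurable_fst.mul (hsin.measurable.comp measurable_snd)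
  -- Read on the circle, `θ ↦ n θ` sends the angular part of `P` to Haar measure for any `n ≠ 0`.
  have hmul (n : ℤ) (hn : n ≠ 0) :
      P.map (Ψ ∘ Prod.map id fun θ => ((n * θ : ℝ) : AddCircle (2 * π))) =
        (ρ.prod volume).map Ψ := by
    rw [← Measure.map_map hΨ (by fun_prop), hP_Ioc,
      AddCircle.map_prodMap_coe_intCast_mul_prod_restrict_Ioc ρ _ hn]
  have hr : ∀ᵐ p ∂P, 0 ≤ p.1 := Measure.quasiMeasurePreserving_fst.ae hρ
  calc P.map (alignment ∘ polarCoord.symm)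
      = P.map (Ψ ∘ Prod.map id fun θ => (((2 : ℤ) * θ : ℝ) : AddCircle (2 * π))) := by
        refine Measure.map_congr (hr.mono fun p hp => ?_)
        simp [Ψ, ← alignment_polarCoord_symm hp]
    _ = P.map (Ψ ∘ Prod.map id fun θ => (((1 : ℤ) * θ : ℝ) : AddCircle (2 * π))) := by
        rw [hmul 2 two_ne_zero, hmul 1 one_ne_zero]
    _ = P.map (Prod.snd ∘ polarCoord.symm) := by
        refine Measure.map_congr (.of_forall fun p => ?_)
        simp [Ψ]

theorem map_alignment_gaussianReal_prod (v : ℝ≥0) :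
    ((gaussianReal 0 v).prod (gaussianReal 0 v)).map alignment = gaussianReal 0 v := by
  rcases eq_or_ne v 0 with rfl | hv
  · simp [Measure.dirac_prod_dirac, Measure.map_dirac' measurable_alignment, alignment]
  set ρ := (volume.restrict (Ioi 0)).withDensity
    fun r => ENNReal.ofReal r * ENNReal.ofReal ((2 * π * v)⁻¹ * exp (-r ^ 2 / (2 * v)))
  have hpolar : (gaussianReal 0 v).prod (gaussianReal 0 v) =
      (ρ.prod (volume.restrict (Ioo (-π) π))).map polarCoord.symm := by
    rw [gaussianReal_prod_gaussianReal_eq_withDensity hv,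
      withDensity_radial_eq_map_polarCoord_symm (g := fun s =>
        ENNReal.ofReal ((2 * π * v)⁻¹ * exp (-s / (2 * v)))) (by fun_prop)]
  have hρ : ∀ᵐ r ∂ρ, 0 ≤ r :=
    (withDensity_absolutelyContinuous _ _).ae_le
      ((ae_restrict_mem measurableSet_Ioi).mono fun r hr => le_of_lt hr)
  have hpolar_measurable : Measurable polarCoord.symm := continuous_polarCoord_symm.measurable
  calc ((gaussianReal 0 v).prod (gaussianReal 0 v)).map alignment
      = ((gaussianReal 0 v).prod (gaussianReal 0 v)).map Prod.snd := by
        rw [hpolar, Measure.map_map measurable_alignment hpolar_measurable,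
          Measure.map_map measurable_snd hpolar_measurable,
          map_alignment_comp_polarCoord_symm_eq_map_snd ρ hρ]
    _ = gaussianReal 0 v := by simp

theorem signal_alignment_gaussian_general
    {Ω : Type*} [MeasurableSpace Ω] (μ : Measure Ω)
    (hk hk' : Ω → ℝ)
    (h1 : Measure.map hk μ = gaussianReal 0 1)
    (h2 : Measure.map hk' μ = gaussianReal 0 1)
    (hindep : IndepFun hk hk' μ) :
    Measure.map (fun ω => 2 * hk ω * hk' ω / Real.sqrt ((hk ω) ^ 2 + (hk' ω) ^ 2)) μ
      = gaussianReal 0 1 := by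
  have hk_meas : AEMeasurable hk μ := .of_map_ne_zero (by simp [h1, NeZero.ne])
  have hk'_meas : AEMeasurable hk' μ := .of_map_ne_zero (by simp [h2, NeZero.ne])
  have hpair : μ.map (fun ω => (hk ω, hk' ω)) = (gaussianReal 0 1).prod (gaussianReal 0 1) := by
    rw [(indepFun_iff_map_prod_eq_prod_map_map' hk_meas hk'_meas (h1 ▸ inferInstance)
      (h2 ▸ inferInstance)).mp hindep, h1, h2]
  rw [← map_alignment_gaussianReal_prod, ← hpair,
    AEMeasurable.map_map_of_aemeasurable measurable_alignment.aemeasurable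
      (hk_meas.prodMk hk'_meas)]
  rfl

theorem signal_alignment_gaussian
    {Ω : Type*} [MeasurableSpace Ω] (μ : Measure Ω) [IsProbabilityMeasure μ]
    (hk hk' : Ω → ℝ)
    (h1 : Measure.map hk μ = gaussianReal 0 1)
    (h2 : Measure.map hk' μ = gaussianReal 0 1)
    (hindep : IndepFun hk hk' μ) :
    Measure.map (fun ω => 2 * hk ω * hk' ω / Real.sqrt ((hk ω) ^ 2 + (hk' ω) ^ 2)) μ
      = gaussianReal 0 1 :=
  signal_alignment_gaussian_general μ hk hk' h1 h2 hindep
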